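/- Let (Λ, d) be a row-finite, source-free k-graph and f ∈ Λ^{e₁} an edge. Then the delayed graph Λ_D (obtained by replacing each edge g in the saturated set ℰ^{e₁} by two edges g¹, g² through a new vertex v_g, and adding one new edge e_α of degree e_i for each commuting square α of degree e₁ + e_i containing an edge of ℰ^{e₁}, with the equivalence relation ∼_D described by Cases 1–3 of the delay construction) is a row-finite, source-free k-graph. -/

import Mathlib

open scoped Classical

/-- A `k`-colored directed graph: vertices, edges, range, source, and a color
(degree) in `Fin k` for each edge. -/
structure ColoredGraph (k : ℕ) where
  V : Type
  E : Type
  src : E → V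
  rng : E → V
  color : E → Fin k

namespace ColoredGraph

variable {k : ℕ}

/-- A list of edges (listed from the source end) is composable starting at `v`. -/
def Composable (G : ColoredGraph k) : G.V → List G.E → Prop
  | _, [] => True
  | v, e :: l => G.src e = v ∧ Composable G (G.rng e) l

/-- The final vertex reached by following a list of edges starting at `v`. -/
def endV (G : ColoredGraph k) : G.V → List G.E → G.V
  | v, [] => v
  | _, e :: l => endV G (G.rng e) l

/-- A finite path in `G` : an element of the path category `G*`.  The edges are
listed starting from the source (so the first edge of the list is the first,
innermost, edge of the path). -/
structure GPath (G : ColoredGraph k) where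
  src : G.V
  edges : List G.E
  comp : G.Composable src edges

namespace GPath

variable {G : ColoredGraph k}

/-- The range of a path. -/
def rng (p : GPath G) : G.V := G.endV p.src p.edges

/-- The color order of a path: the list of colors of its edges, starting from
the source end. -/
def colors (p : GPath G) : List (Fin k) := p.edges.map G.color

/-- The degree of a path, as an element of `ℕ^k`. -/
def deg (p : GPath G) : Fin k → ℕ := fun i => p.colors.count i

end GPath

theorem composable_append {G : ColoredGraph k} :
    ∀ (l₁ : List G.E) (v : G.V) (l₂ : List G.E),
      G.Composable v l₁ → G.Composable (G.endV v l₁) l₂ → G.Composable v (l₁ ++ l₂) := by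
  intro l₁
  induction l₁ with
  | nil => intro v l₂ _ h₂; exact h₂
  | cons e l ih => intro v l₂ h₁ h₂; exact ⟨h₁.1, ih (G.rng e) l₂ h₁.2 h₂⟩

theorem endV_append {G : ColoredGraph k} :
    ∀ (l₁ : List G.E) (v : G.V) (l₂ : List G.E),
      G.endV v (l₁ ++ l₂) = G.endV (G.endV v l₁) l₂ := by
  intro l₁
  induction l₁ with
  | nil => intro v l₂; rfl
  | cons e l ih => intro v l₂; exact ih (G.rng e) l₂

/-- Concatenation of composable paths. -/
def GPath.append {G : ColoredGraph k} (p q : GPath G) (h : p.rng = q.src) : GPath G :=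
  ⟨p.src, p.edges ++ q.edges,
    composable_append p.edges p.src q.edges p.comp
      (by rw [show G.endV p.src p.edges = q.src from h]; exact q.comp)⟩

/-- The path consisting of a single edge. -/
def edgePath (G : ColoredGraph k) (e : G.E) : GPath G :=
  ⟨G.src e, [e], by exact ⟨rfl, True.intro⟩⟩

/-- The relation preserves range, source and degree. -/
def PreservesRSD (G : ColoredGraph k) (rel : GPath G → GPath G → Prop) : Prop :=
  ∀ p q : GPath G, rel p q → p.src = q.src ∧ p.rng = q.rng ∧ p.deg = q.deg

/-- (KG0): the relation respects concatenation of paths. -/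
def KG0 (G : ColoredGraph k) (rel : GPath G → GPath G → Prop) : Prop :=
  ∀ (p₁ p₂ q₁ q₂ : GPath G) (h : p₁.rng = p₂.src) (h' : q₁.rng = q₂.src),
    rel p₁ q₁ → rel p₂ q₂ → rel (p₁.append p₂ h) (q₁.append q₂ h')

/-- (KG4): for each path and each permutation of its color order there is a
unique equivalent path with the permuted color order. -/
def KG4 (G : ColoredGraph k) (rel : GPath G → GPath G → Prop) : Prop :=
  ∀ (p : GPath G) (c : List (Fin k)), List.Perm c p.colors →
    ∃! q : GPath G, rel q p ∧ q.colors = c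

/-- (KG1): distinct edges are inequivalent. -/
def KG1 (G : ColoredGraph k) (rel : GPath G → GPath G → Prop) : Prop :=
  ∀ e f : G.E, rel (edgePath G e) (edgePath G f) ↔ e = f

/-- (KG2): completeness for bi-colored paths. -/
def KG2 (G : ColoredGraph k) (rel : GPath G → GPath G → Prop) : Prop :=
  ∀ (p : GPath G) (i j : Fin k), p.colors = [i, j] →
    ∃! q : GPath G, rel p q ∧ q.colors = [j, i]

/-- An equivalence relation, together with `KG0` and `KG4`, presents a `k`-graph. -/
def IsKGraphRel (G : ColoredGraph k) (rel : GPath G → GPath G → Prop) : Prop :=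
  Equivalence rel ∧ PreservesRSD G rel ∧ KG0 G rel ∧ KG4 G rel

/-- Every vertex receives an edge of every color. -/
def SourceFree (G : ColoredGraph k) : Prop :=
  ∀ (v : G.V) (i : Fin k), ∃ e : G.E, G.rng e = v ∧ G.color e = i

/-- Every vertex receives finitely many edges of each color. -/
def RowFinite (G : ColoredGraph k) : Prop :=
  ∀ (v : G.V) (i : Fin k), Set.Finite {e : G.E | G.rng e = v ∧ G.color e = i}

/-- `q` is obtained from `p` by replacing the initial (inner) two-edge subpath by
an equivalent two-edge path with transposed colors. -/
def SwapInner (G : ColoredGraph k) (rel : GPath G → GPath G → Prop) (p q : GPath G) : Prop :=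
  ∃ (a b w : GPath G) (ha : a.rng = w.src) (hb : b.rng = w.src),
    a.edges.length = 2 ∧ b.colors = a.colors.reverse ∧ rel a b ∧
    p = a.append w ha ∧ q = b.append w hb

/-- `q` is obtained from `p` by replacing the final (outer) two-edge subpath by
an equivalent two-edge path with transposed colors. -/
def SwapOuter (G : ColoredGraph k) (rel : GPath G → GPath G → Prop) (p q : GPath G) : Prop :=
  ∃ (w a b : GPath G) (ha : w.rng = a.src) (hb : w.rng = b.src),
    a.edges.length = 2 ∧ b.colors = a.colors.reverse ∧ rel a b ∧
    p = w.append a ha ∧ q = w.append b hb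

/-- (KG3): associativity. For a tri-colored path with pairwise distinct colors,
the two standard routes of successive pairwise swaps give the same result. -/
def KG3 (G : ColoredGraph k) (rel : GPath G → GPath G → Prop) : Prop :=
  ∀ (p : GPath G) (i j l : Fin k), i ≠ j → j ≠ l → i ≠ l →
    p.colors = [l, j, i] → ∀ p₁ p₂ p₃ q₁ q₂ q₃ : GPath G,
      SwapOuter G rel p p₁ → SwapInner G rel p₁ p₂ → SwapOuter G rel p₂ p₃ →
      SwapInner G rel p q₁ → SwapOuter G rel q₁ q₂ → SwapInner G rel q₂ q₃ → p₃ = q₃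

/-- `w ≤ v` : there is a path from `v` to `w` (source `v`, range `w`). -/
def LeV (G : ColoredGraph k) (v w : G.V) : Prop :=
  ∃ p : GPath G, p.src = v ∧ p.rng = w

theorem LeV_extend {G : ColoredGraph k} {v : G.V} (e : G.E)
    (h : LeV G v (G.src e)) : LeV G v (G.rng e) := by
  obtain ⟨p, hs, hr⟩ := h
  refine ⟨p.append (edgePath G e) hr, hs, ?_⟩
  show G.endV p.src (p.edges ++ [e]) = G.rng e
  exact (endV_append p.edges p.src [e]).trans rfl

/-- A complete edge from `u` to `w`: exactly one edge of each color, all with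
source `u` and range `w`, closed under commuting squares. -/
def IsCompleteEdge (G : ColoredGraph k) (rel : GPath G → GPath G → Prop)
    (E : Set G.E) (u w : G.V) : Prop :=
  (∀ i : Fin k, ∃! e : G.E, e ∈ E ∧ G.color e = i) ∧
  (∀ e ∈ E, G.src e = u ∧ G.rng e = w) ∧
  (∀ e ∈ E, ∀ a b f' : G.E, ∀ p q : GPath G,
    ((p.edges = [a, e] ∧ q.edges = [b, f']) ∨ (p.edges = [e, a] ∧ q.edges = [f', b])) →
    rel p q → f' ∈ E)

/-- A set `T` of edges of the color of `f` is closed under being opposite to a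
member in a commuting square whose other color differs from that of `f`. -/
def SqClosed (G : ColoredGraph k) (rel : GPath G → GPath G → Prop)
    (f : G.E) (T : Set G.E) : Prop :=
  ∀ g ∈ T, ∀ (e a b : G.E) (p q : GPath G),
    G.color a = G.color b → G.color a ≠ G.color f → G.color e = G.color f →
    ((p.edges = [g, a] ∧ q.edges = [b, e]) ∨ (p.edges = [a, g] ∧ q.edges = [e, b])) →
    rel p q → e ∈ T

/-- The saturation hypothesis used to define the ranges of the new edges of the
delayed graph: every commuting square with inner `e₁`-edge in `S` has its outer
`e₁`-edge in `S`. -/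
def SatHyp (G : ColoredGraph k) (rel : GPath G → GPath G → Prop)
    (f : G.E) (S : Set G.E) : Prop :=
  ∀ g : G.E, g ∈ S → ∀ b : G.E, G.src b = G.rng g → G.color b ≠ G.color f →
    ∃ x : {h : G.E // h ∈ S} × G.E, ∃ p q : GPath G,
      p.edges = [g, b] ∧ q.edges = [x.2, x.1.1] ∧ rel p q

/-- Vertices of the delayed graph: the old vertices, plus one new vertex `v_g`
for each delayed edge `g ∈ S`. -/
abbrev DV (G : ColoredGraph k) (S : Set G.E) := G.V ⊕ {g : G.E // g ∈ S}

/-- Edges of the delayed graph: the old edges not in `S`; two halves `g¹, g²`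
(indexed by `Bool`, `false` for `g¹`) for each `g ∈ S`; and one new edge `e_α`
for each commuting square `α = [b∘g]` with `g ∈ S` and `b` of another color. -/
abbrev DE (G : ColoredGraph k) (f : G.E) (S : Set G.E) :=
  {e : G.E // e ∉ S} ⊕ (({g : G.E // g ∈ S} × Bool) ⊕
    {p : G.E × G.E // p.1 ∈ S ∧ G.src p.2 = G.rng p.1 ∧ G.color p.2 ≠ G.color f})

/-- An old edge of the delayed graph. -/
def DelayOld (G : ColoredGraph k) (f : G.E) (S : Set G.E) (e : G.E) (h : e ∉ S) :
    DE G f S := Sum.inl ⟨e, h⟩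

/-- A half `g¹` (`b = false`) or `g²` (`b = true`) of a delayed edge `g ∈ S`. -/
def DelayHalf (G : ColoredGraph k) (f : G.E) (S : Set G.E) (g : G.E) (hg : g ∈ S)
    (b : Bool) : DE G f S := Sum.inr (Sum.inl (⟨g, hg⟩, b))

/-- The new edge `e_α` for the commuting square `α = [b∘g]`. -/
def DelayNew (G : ColoredGraph k) (f : G.E) (S : Set G.E) (g b : G.E)
    (h : g ∈ S ∧ G.src b = G.rng g ∧ G.color b ≠ G.color f) : DE G f S :=
  Sum.inr (Sum.inr ⟨(g, b), h⟩)

/-- The delayed colored graph: each `g ∈ S` is replaced by `g¹` (from `s(g)` to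
the new vertex `v_g`) followed by `g²` (from `v_g` to `r(g)`), and the new edge
`e_α` for `α = [b∘g]` runs from `v_g` to `v_h`, where `h` is the outer
`e₁`-edge of the square `α` (obtained from the saturation hypothesis). -/
noncomputable def DelayGraph (G : ColoredGraph k) (rel : GPath G → GPath G → Prop)
    (f : G.E) (S : Set G.E) (hsat : SatHyp G rel f S) : ColoredGraph k where
  V := DV G S
  E := DE G f S
  src := fun ε => match ε with
    | Sum.inl e => Sum.inl (G.src e.1)
    | Sum.inr (Sum.inl (g, b)) => if b then Sum.inr g else Sum.inl (G.src g.1)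
    | Sum.inr (Sum.inr x) => Sum.inr ⟨x.1.1, x.2.1⟩
  rng := fun ε => match ε with
    | Sum.inl e => Sum.inl (G.rng e.1)
    | Sum.inr (Sum.inl (g, b)) => if b then Sum.inl (G.rng g.1) else Sum.inr g
    | Sum.inr (Sum.inr x) =>
        Sum.inr (Classical.choose (hsat x.1.1 x.2.1 x.1.2 x.2.2.1 x.2.2.2)).1
  color := fun ε => match ε with
    | Sum.inl e => G.color e.1
    | Sum.inr (Sum.inl (g, _)) => G.color g.1
    | Sum.inr (Sum.inr x) => G.color x.1.2

/-- The equivalence relation on paths of the delayed graph: the smallest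
equivalence relation containing the base relations of Cases 1–3 of the delay
construction and closed under concatenation (KG0).

* `old` (Case 1): paths consisting of old edges are related when their parents
  are related in the original graph.
* `splitTop` (Case 2a): if `b∘g ∼ h∘a` in `Λ` with `g, h ∈ S`, then
  `b ∘ g² ∼_D h² ∘ e_{[b∘g]}`.
* `splitBottom` (Case 2b): in the same situation, `e_{[b∘g]} ∘ g¹ ∼_D h¹ ∘ a`.
* `cube` (Case 3): `e_β ∘ e_α ∼_D e_γ ∘ e_δ` when the squares
  `α = [a∘g₀], β = [b∘g₁], δ = [b'∘g₀], γ = [a'∘g₃]` form a 3-cube over the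
  common edge `g₀ ∈ S`, i.e. the rectangles `b∘a∘g₀` and `a'∘b'∘g₀` are
  equivalent in `Λ` and `g₁` (resp. `g₃`) is the outer `e₁`-edge of the square
  on `a∘g₀` (resp. `b'∘g₀`). -/
inductive DelayRel (G : ColoredGraph k) (rel : GPath G → GPath G → Prop)
    (f : G.E) (S : Set G.E) (hsat : SatHyp G rel f S) :
    GPath (DelayGraph G rel f S hsat) → GPath (DelayGraph G rel f S hsat) → Prop
  | old (p q : GPath (DelayGraph G rel f S hsat)) (p' q' : GPath G)
      (hp : List.Forall₂ (fun ε e => ∃ h : e ∉ S, ε = DelayOld G f S e h) p.edges p'.edges)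
      (hps : p.src = Sum.inl p'.src)
      (hq : List.Forall₂ (fun ε e => ∃ h : e ∉ S, ε = DelayOld G f S e h) q.edges q'.edges)
      (hqs : q.src = Sum.inl q'.src)
      (hrel : rel p' q') : DelayRel G rel f S hsat p q
  | splitTop (p q : GPath (DelayGraph G rel f S hsat)) (g h a b : G.E)
      (hg : g ∈ S) (hh : h ∈ S) (hb : b ∉ S)
      (hcond : g ∈ S ∧ G.src b = G.rng g ∧ G.color b ≠ G.color f)
      (p' q' : GPath G)
      (hp' : p'.edges = [g, b]) (hq' : q'.edges = [a, h]) (hrel : rel p' q')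
      (hp : p.edges = [DelayHalf G f S g hg true, DelayOld G f S b hb])
      (hq : q.edges = [DelayNew G f S g b hcond, DelayHalf G f S h hh true]) :
      DelayRel G rel f S hsat p q
  | splitBottom (p q : GPath (DelayGraph G rel f S hsat)) (g h a b : G.E)
      (hg : g ∈ S) (hh : h ∈ S) (ha : a ∉ S)
      (hcond : g ∈ S ∧ G.src b = G.rng g ∧ G.color b ≠ G.color f)
      (p' q' : GPath G)
      (hp' : p'.edges = [g, b]) (hq' : q'.edges = [a, h]) (hrel : rel p' q')
      (hp : p.edges = [DelayHalf G f S g hg false, DelayNew G f S g b hcond])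
      (hq : q.edges = [DelayOld G f S a ha, DelayHalf G f S h hh false]) :
      DelayRel G rel f S hsat p q
  | cube (p q : GPath (DelayGraph G rel f S hsat)) (g₀ g₁ g₃ a b a' b' a₁ b₁ : G.E)
      (hg₀ : g₀ ∈ S) (hg₁ : g₁ ∈ S) (hg₃ : g₃ ∈ S)
      (hc₁ : g₀ ∈ S ∧ G.src a = G.rng g₀ ∧ G.color a ≠ G.color f)
      (hc₂ : g₁ ∈ S ∧ G.src b = G.rng g₁ ∧ G.color b ≠ G.color f)
      (hc₃ : g₀ ∈ S ∧ G.src b' = G.rng g₀ ∧ G.color b' ≠ G.color f)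
      (hc₄ : g₃ ∈ S ∧ G.src a' = G.rng g₃ ∧ G.color a' ≠ G.color f)
      (P Q u u' w w' : GPath G)
      (hP : P.edges = [g₀, a, b]) (hQ : Q.edges = [g₀, b', a']) (hPQ : rel P Q)
      (hu : u.edges = [g₀, a]) (hu' : u'.edges = [a₁, g₁]) (huu : rel u u')
      (hw : w.edges = [g₀, b']) (hw' : w'.edges = [b₁, g₃]) (hww : rel w w')
      (hp : p.edges = [DelayNew G f S g₀ a hc₁, DelayNew G f S g₁ b hc₂])
      (hq : q.edges = [DelayNew G f S g₀ b' hc₃, DelayNew G f S g₃ a' hc₄]) :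
      DelayRel G rel f S hsat p q
  | refl (p : GPath (DelayGraph G rel f S hsat)) : DelayRel G rel f S hsat p p
  | symm (p q : GPath (DelayGraph G rel f S hsat)) :
      DelayRel G rel f S hsat p q → DelayRel G rel f S hsat q p
  | trans (p q r : GPath (DelayGraph G rel f S hsat)) :
      DelayRel G rel f S hsat p q → DelayRel G rel f S hsat q r →
      DelayRel G rel f S hsat p r
  | concat (p₁ p₂ q₁ q₂ : GPath (DelayGraph G rel f S hsat))
      (h : p₁.rng = p₂.src) (h' : q₁.rng = q₂.src) :
      DelayRel G rel f S hsat p₁ q₁ → DelayRel G rel f S hsat p₂ q₂ →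
      DelayRel G rel f S hsat (p₁.append p₂ h) (q₁.append q₂ h')

/-!
Equivalence in `Λ_D` is read through the functor `Λ_D → Λ` that contracts every `g²`
(`v_g ↦ r(g)`, `g¹ ↦ g`, `e_{[b∘g]} ↦ b`). Every generating relation of `∼_D` preserves
endpoints, degree and the `∼`-class of this image; for Case 3 the ranges agree because both
routes around the cube carry `g₀` to the same edge of `ℰ^{e₁}`. Conversely, by unique
factorization in `Λ`, a path of `Λ_D` is determined by its source, its color order and the
`∼`-class of its image: this is uniqueness in (KG4). Existence in (KG4) reduces to transposing
two adjacent edges of distinct colors, which Cases 1–3 provide for each kind of pair, closedness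
of `ℰ^{e₁}` keeping the transposed old edges old. Source-freeness and row-finiteness pass from
`Λ` to `Λ_D` through the squares chosen by the saturation hypothesis.
-/

theorem composable_append_iff {G : ColoredGraph k} :
    ∀ (l₁ : List G.E) (v : G.V) (l₂ : List G.E),
      G.Composable v (l₁ ++ l₂) ↔ G.Composable v l₁ ∧ G.Composable (G.endV v l₁) l₂
  | [], _, _ => ⟨fun h => ⟨trivial, h⟩, fun h => h.2⟩
  | e :: l, _, l₂ => by
    simp only [List.cons_append, Composable, endV, composable_append_iff l _ l₂, and_assoc]

namespace GPath

variable {H : ColoredGraph k}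

theorem ext {p q : GPath H} (hs : p.src = q.src) (he : p.edges = q.edges) : p = q := by
  cases p; cases q; cases hs; cases he; rfl

theorem src_of_edges_eq_cons {p : GPath H} {e : H.E} {l : List H.E} (h : p.edges = e :: l) :
    p.src = H.src e := by
  obtain ⟨s, edges, c⟩ := p
  subst h
  exact c.1.symm

theorem rng_of_edges_eq_concat {p : GPath H} {l : List H.E} {e : H.E} (h : p.edges = l ++ [e]) :
    p.rng = H.rng e := by
  obtain ⟨s, edges, c⟩ := p
  subst h
  exact endV_append l s [e]

theorem eq_of_edges_eq {p q : GPath H} (h : p.edges = q.edges) (hne : p.edges ≠ []) : p = q := by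
  obtain ⟨e, l, hp⟩ := List.exists_cons_of_ne_nil hne
  exact ext ((src_of_edges_eq_cons hp).trans (src_of_edges_eq_cons (h ▸ hp)).symm) h

@[simp] theorem edges_append (p q : GPath H) (h : p.rng = q.src) :
    (p.append q h).edges = p.edges ++ q.edges := rfl

theorem rng_append (p q : GPath H) (h : p.rng = q.src) : (p.append q h).rng = q.rng := by
  show H.endV p.src (p.edges ++ q.edges) = H.endV q.src q.edges
  rw [endV_append, ← h]
  rfl

theorem colors_append (p q : GPath H) (h : p.rng = q.src) :
    (p.append q h).colors = p.colors ++ q.colors :=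
  List.map_append ..

theorem exists_eq_append {p : GPath H} {l₁ l₂ : List H.E} (h : p.edges = l₁ ++ l₂) :
    ∃ (p₁ p₂ : GPath H) (hg : p₁.rng = p₂.src),
      p₁.edges = l₁ ∧ p₂.edges = l₂ ∧ p = p₁.append p₂ hg := by
  obtain ⟨s, edges, c⟩ := p
  subst h
  obtain ⟨c₁, c₂⟩ := (composable_append_iff l₁ s l₂).1 c
  exact ⟨⟨s, l₁, c₁⟩, ⟨_, l₂, c₂⟩, rfl, rfl, rfl, rfl⟩

end GPath

section KGraphRel

variable {H : ColoredGraph k} {R : GPath H → GPath H → Prop}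

theorem colors_perm_of_rel (hP : PreservesRSD H R) {p q : GPath H} (h : R p q) :
    p.colors.Perm q.colors :=
  List.perm_iff_count.2 fun c => congrFun (hP p q h).2.2 c

theorem eq_of_rel_of_colors_eq (hK : IsKGraphRel H R) {p q : GPath H} (h : R p q)
    (hc : p.colors = q.colors) : p = q := by
  obtain ⟨_, -, hun⟩ := hK.2.2.2 q q.colors (List.Perm.refl _)
  exact (hun p ⟨h, hc⟩).trans (hun q ⟨hK.1.refl q, rfl⟩).symm

/-- The unique factorization property of a `k`-graph. -/
theorem rel_and_rel_of_rel_append (hK : IsKGraphRel H R) {p₁ p₂ q₁ q₂ : GPath H}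
    {hp : p₁.rng = p₂.src} {hq : q₁.rng = q₂.src} (h : R (p₁.append p₂ hp) (q₁.append q₂ hq))
    (hc : p₁.colors.Perm q₁.colors) : R p₁ q₁ ∧ R p₂ q₂ := by
  obtain ⟨hE, hP, hC, hU⟩ := hK
  have hc₂ : p₂.colors.Perm q₂.colors := by
    have h' := colors_perm_of_rel hP h
    rw [GPath.colors_append, GPath.colors_append] at h'
    exact (List.perm_append_left_iff q₁.colors).1 ((hc.append_right _).symm.trans h')
  obtain ⟨p₁', ⟨h₁, hc₁⟩, -⟩ := hU p₁ q₁.colors hc.symm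
  obtain ⟨p₂', ⟨h₂, hc₂'⟩, -⟩ := hU p₂ q₂.colors hc₂.symm
  have hg : p₁'.rng = p₂'.src := (hP _ _ h₁).2.1.trans (hp.trans (hP _ _ h₂).1.symm)
  have heq : p₁'.append p₂' hg = q₁.append q₂ hq :=
    eq_of_rel_of_colors_eq ⟨hE, hP, hC, hU⟩ (hE.trans (hC _ _ _ _ _ _ h₁ h₂) h)
      (by rw [GPath.colors_append, GPath.colors_append, hc₁, hc₂'])
  have hlen : p₁'.edges.length = q₁.edges.length := by
    simpa [GPath.colors] using congrArg List.length hc₁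
  obtain ⟨he₁, he₂⟩ := List.append_inj (congrArg GPath.edges heq) hlen
  have hs := congrArg GPath.src heq
  obtain rfl : p₁' = q₁ := GPath.ext hs he₁
  obtain rfl : p₂' = q₂ := GPath.ext (hg.symm.trans hq) he₂
  exact ⟨hE.symm h₁, hE.symm h₂⟩

/-- A nonempty path is determined by its edges, so for nonempty lists this is just `R`. -/
def EdgesRel (H : ColoredGraph k) (R : GPath H → GPath H → Prop) (l m : List H.E) : Prop :=
  ∃ p q : GPath H, p.edges = l ∧ q.edges = m ∧ R p q

namespace EdgesRel

variable {l m n l' m' u : List H.E}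

theorem refl (hE : Equivalence R) {v : H.V} (hc : H.Composable v l) : EdgesRel H R l l :=
  ⟨⟨v, l, hc⟩, ⟨v, l, hc⟩, rfl, rfl, hE.refl _⟩

theorem symm (hE : Equivalence R) (h : EdgesRel H R l m) : EdgesRel H R m l :=
  let ⟨p, q, hp, hq, hr⟩ := h
  ⟨q, p, hq, hp, hE.symm hr⟩

theorem trans (hE : Equivalence R) (h₁ : EdgesRel H R l m) (h₂ : EdgesRel H R m n)
    (hm : m ≠ []) : EdgesRel H R l n := by
  obtain ⟨p, q, hp, hq, hr⟩ := h₁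
  obtain ⟨q', r, hq', hr', hr₂⟩ := h₂
  obtain rfl : q = q' := GPath.eq_of_edges_eq (hq.trans hq'.symm) (hq ▸ hm)
  exact ⟨p, r, hp, hr', hE.trans hr hr₂⟩

theorem rel (h : EdgesRel H R l m) {p q : GPath H} (hp : p.edges = l) (hq : q.edges = m)
    (hl : l ≠ []) (hm : m ≠ []) : R p q := by
  obtain ⟨p', q', hp', hq', hr⟩ := h
  rwa [GPath.eq_of_edges_eq (hp.trans hp'.symm) (hp ▸ hl),
    GPath.eq_of_edges_eq (hq.trans hq'.symm) (hq ▸ hm)]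

theorem perm (hP : PreservesRSD H R) (h : EdgesRel H R l m) :
    (l.map H.color).Perm (m.map H.color) := by
  obtain ⟨p, q, rfl, rfl, hr⟩ := h
  exact colors_perm_of_rel hP hr

theorem eq_of_map_color_eq (hK : IsKGraphRel H R) (h : EdgesRel H R l m)
    (hc : l.map H.color = m.map H.color) : l = m := by
  obtain ⟨p, q, rfl, rfl, hr⟩ := h
  exact congrArg GPath.edges (eq_of_rel_of_colors_eq hK hr hc)

theorem append (hK : IsKGraphRel H R) (h : EdgesRel H R l m) (h' : EdgesRel H R l' m')
    (hl : l ≠ []) (hl' : l' ≠ []) {v : H.V} (hc : H.Composable v (l ++ l')) :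
    EdgesRel H R (l ++ l') (m ++ m') := by
  obtain ⟨p, q, rfl, rfl, hr⟩ := h
  obtain ⟨p', q', rfl, rfl, hr'⟩ := h'
  obtain ⟨e, t, he⟩ := List.exists_cons_of_ne_nil hl
  obtain ⟨e', t', he'⟩ := List.exists_cons_of_ne_nil hl'
  obtain ⟨c, c'⟩ := (composable_append_iff _ _ _).1 hc
  have hv : p.src = v := by rw [GPath.src_of_edges_eq_cons he]; rw [he] at c; exact c.1
  have hg : p.rng = p'.src := by
    rw [GPath.src_of_edges_eq_cons he']; rw [he'] at c'; exact (hv ▸ c'.1).symm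
  have hg' : q.rng = q'.src := (hK.2.1 _ _ hr).2.1.symm.trans (hg.trans (hK.2.1 _ _ hr').1)
  exact ⟨p.append p' hg, q.append q' hg', rfl, rfl, hK.2.2.1 _ _ _ _ _ _ hr hr'⟩

theorem append_inv (hK : IsKGraphRel H R) {l₁ l₂ m₁ m₂ : List H.E}
    (h : EdgesRel H R (l₁ ++ l₂) (m₁ ++ m₂)) (hc : (l₁.map H.color).Perm (m₁.map H.color)) :
    EdgesRel H R l₁ m₁ ∧ EdgesRel H R l₂ m₂ := by
  obtain ⟨p, q, hp, hq, hr⟩ := h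
  obtain ⟨p₁, p₂, _, rfl, rfl, rfl⟩ := GPath.exists_eq_append hp
  obtain ⟨q₁, q₂, _, rfl, rfl, rfl⟩ := GPath.exists_eq_append hq
  obtain ⟨r₁, r₂⟩ := rel_and_rel_of_rel_append hK hr hc
  exact ⟨⟨p₁, q₁, rfl, rfl, r₁⟩, ⟨p₂, q₂, rfl, rfl, r₂⟩⟩

theorem of_append_left (hK : IsKGraphRel H R) {u : List H.E}
    (h : EdgesRel H R (u ++ l) (u ++ m)) : EdgesRel H R l m :=
  (append_inv hK h (List.Perm.refl _)).2

theorem edge_eq (hK : IsKGraphRel H R) {e e' : H.E} (h : EdgesRel H R [e] [e'])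
    (hc : H.color e = H.color e') : e = e' :=
  List.head_eq_of_cons_eq (eq_of_map_color_eq hK h (by simp [hc]))

theorem head_eq (hK : IsKGraphRel H R) {e e' : H.E} (h : EdgesRel H R (e :: l) (e' :: m))
    (hc : H.color e = H.color e') : e = e' ∧ EdgesRel H R l m := by
  obtain ⟨h₁, h₂⟩ := append_inv (l₁ := [e]) (m₁ := [e']) hK h (by simp [hc])
  exact ⟨edge_eq hK h₁ hc, h₂⟩

theorem last_eq (hK : IsKGraphRel H R) {e e' : H.E} (h : EdgesRel H R (l ++ [e]) (m ++ [e']))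
    (hc : H.color e = H.color e') : e = e' := by
  have hperm := h.perm hK.2.1
  rw [List.map_append, List.map_append, List.map_singleton, List.map_singleton, hc,
    List.perm_append_right_iff] at hperm
  exact edge_eq hK (append_inv hK h hperm).2 hc

theorem exists_composable_right (h : EdgesRel H R l m) : ∃ v, H.Composable v m :=
  let ⟨_, q, _, hq, _⟩ := h
  ⟨q.src, hq ▸ q.comp⟩

theorem append_right (hK : IsKGraphRel H R) (h : EdgesRel H R l m) (hl : l ≠ []) (hu : u ≠ [])
    {v : H.V} (hc : H.Composable v (l ++ u)) : EdgesRel H R (l ++ u) (m ++ u) :=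
  h.append hK (refl hK.1 ((composable_append_iff _ _ _).1 hc).2) hl hu hc

theorem append_left (hK : IsKGraphRel H R) (h : EdgesRel H R l m) (hu : u ≠ []) (hl : l ≠ [])
    {v : H.V} (hc : H.Composable v (u ++ l)) : EdgesRel H R (u ++ l) (u ++ m) :=
  (refl hK.1 ((composable_append_iff _ _ _).1 hc).1).append hK h hu hl hc

variable {g b a h : H.E}

theorem square_endpoints (hP : PreservesRSD H R) (hs : EdgesRel H R [g, b] [a, h]) :
    H.src a = H.src g ∧ H.src h = H.rng a ∧ H.rng h = H.rng b := by
  obtain ⟨p, q, hp, hq, hr⟩ := hs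
  have hc := q.comp
  rw [hq] at hc
  refine ⟨?_, hc.2.1, ?_⟩
  · rw [← GPath.src_of_edges_eq_cons hp, ← GPath.src_of_edges_eq_cons hq, (hP _ _ hr).1]
  · rw [← GPath.rng_of_edges_eq_concat (l := [g]) hp,
      ← GPath.rng_of_edges_eq_concat (l := [a]) hq, (hP _ _ hr).2.1]

theorem color_eq_of_square (hP : PreservesRSD H R) (hs : EdgesRel H R [g, b] [a, h])
    (hc : H.color g = H.color h) : H.color a = H.color b := by
  have hperm := hs.perm hP
  simp only [List.map_cons, List.map_nil, hc] at hperm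
  have := List.perm_singleton.1 (hperm.trans (List.Perm.swap _ _ _)).cons_inv
  simp_all

end EdgesRel

def Swappable (H : ColoredGraph k) (R : GPath H → GPath H → Prop) (e₁ e₂ : H.E) : Prop :=
  ∃ e₁' e₂' : H.E, EdgesRel H R [e₁', e₂'] [e₁, e₂] ∧
    H.color e₁' = H.color e₂ ∧ H.color e₂' = H.color e₁

theorem Swappable.of_rel {H : ColoredGraph k} {R : GPath H → GPath H → Prop}
    {e₁ e₂ e₁' e₂' : H.E} (h' : H.src e₂' = H.rng e₁') (h : H.src e₂ = H.rng e₁)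
    (hr : R ⟨_, [e₁', e₂'], ⟨rfl, h', trivial⟩⟩ ⟨_, [e₁, e₂], ⟨rfl, h, trivial⟩⟩)
    (hc₁ : H.color e₁' = H.color e₂) (hc₂ : H.color e₂' = H.color e₁) : Swappable H R e₁ e₂ :=
  ⟨e₁', e₂', ⟨_, _, rfl, rfl, hr⟩, hc₁, hc₂⟩

theorem IsKGraphRel.swappable (hK : IsKGraphRel H R) {e₁ e₂ : H.E} (h : H.src e₂ = H.rng e₁) :
    Swappable H R e₁ e₂ := by
  obtain ⟨⟨s, l, c⟩, ⟨hr, hc⟩, -⟩ := hK.2.2.2 ⟨H.src e₁, [e₁, e₂], ⟨rfl, h, trivial⟩⟩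
    [H.color e₂, H.color e₁] (List.Perm.swap _ _ _)
  rcases l with _ | ⟨e₁', _ | ⟨e₂', _ | ⟨_, _⟩⟩⟩ <;> simp only [GPath.colors, List.map_cons,
    List.map_nil, List.cons.injEq, reduceCtorEq, and_false] at hc
  exact ⟨e₁', e₂', ⟨_, _, rfl, rfl, hr⟩, hc.1, hc.2.1⟩

theorem exists_rel_colors_eq_of_swappable (hE : Equivalence R) (hP : PreservesRSD H R)
    (hC : KG0 H R)
    (hswap : ∀ e₁ e₂ : H.E, H.src e₂ = H.rng e₁ → H.color e₁ ≠ H.color e₂ → Swappable H R e₁ e₂)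
    {c d : List (Fin k)} (hcd : c.Perm d) :
    ∀ p : GPath H, p.colors = d → ∃ q, R q p ∧ q.colors = c := by
  induction hcd with
  | nil => exact fun p hp => ⟨p, hE.refl p, hp⟩
  | @cons x c d _ ih =>
    intro p hp
    obtain ⟨ε, t, he, hx, ht⟩ := List.map_eq_cons_iff.1 hp
    obtain ⟨p₁, p₂, hg, hp₁, rfl, rfl⟩ := GPath.exists_eq_append (l₁ := [ε]) he
    obtain ⟨q₂, hr, hc⟩ := ih p₂ ht
    refine ⟨p₁.append q₂ (hg.trans (hP _ _ hr).1.symm), hC _ _ _ _ _ _ (hE.refl p₁) hr, ?_⟩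
    rw [GPath.colors_append, hc, GPath.colors, hp₁, List.map_singleton, hx, List.singleton_append]
  | swap x y l =>
    intro p hp
    obtain ⟨ε₁, t, he, hx, ht⟩ := List.map_eq_cons_iff.1 hp
    obtain ⟨ε₂, t, rfl, hy, rfl⟩ := List.map_eq_cons_iff.1 ht
    by_cases hxy : x = y
    · subst hxy
      exact ⟨p, hE.refl p, hp⟩
    obtain ⟨P, T, hg, hP₂, rfl, rfl⟩ := GPath.exists_eq_append (l₁ := [ε₁, ε₂]) he
    have hglue : H.src ε₂ = H.rng ε₁ := by have c := P.comp; rw [hP₂] at c; exact c.2.1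
    obtain ⟨e₁', e₂', hs, hc₁, hc₂⟩ := hswap ε₁ ε₂ hglue (by rw [hx, hy]; exact hxy)
    obtain ⟨P', P'', hP', hP'', hr⟩ := hs
    obtain rfl : P'' = P := GPath.eq_of_edges_eq (hP''.trans hP₂.symm) (by simp [hP''])
    refine ⟨P'.append T ((hP _ _ hr).2.1.trans hg), hC _ _ _ _ _ _ hr (hE.refl T), ?_⟩
    simp [GPath.colors, hP', hc₁, hc₂, hx, hy]
  | trans _ _ ih₁ ih₂ =>
    intro p hp
    obtain ⟨q', hr', hc'⟩ := ih₂ p hp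
    obtain ⟨q, hr, hc⟩ := ih₁ q' hc'
    exact ⟨q, hE.trans hr hr', hc⟩

theorem isKGraphRel_of_swappable (hE : Equivalence R) (hP : PreservesRSD H R) (hC : KG0 H R)
    (hswap : ∀ e₁ e₂ : H.E, H.src e₂ = H.rng e₁ → H.color e₁ ≠ H.color e₂ → Swappable H R e₁ e₂)
    (huniq : ∀ p q : GPath H, R p q → p.colors = q.colors → p = q) : IsKGraphRel H R := by
  refine ⟨hE, hP, hC, fun p c hc => ?_⟩
  obtain ⟨q, hq, hqc⟩ := exists_rel_colors_eq_of_swappable hE hP hC hswap hc p rfl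
  exact ⟨q, ⟨hq, hqc⟩, fun q' ⟨hq', hq'c⟩ =>
    huniq _ _ (hE.trans hq' (hE.symm hq)) (hq'c.trans hqc.symm)⟩

end KGraphRel

theorem SqClosed.mem_of_square {G : ColoredGraph k} {rel : GPath G → GPath G → Prop} {f : G.E}
    {T : Set G.E} (hT : SqClosed G rel f T) (hTcol : ∀ g ∈ T, G.color g = G.color f)
    {x₁ x₂ y₁ y₂ : G.E} (hs : EdgesRel G rel [x₁, x₂] [y₁, y₂])
    (hy₁ : G.color y₁ = G.color x₂) (hy₂ : G.color y₂ = G.color x₁)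
    (hne : G.color x₁ ≠ G.color x₂) : (x₁ ∈ T → y₂ ∈ T) ∧ (x₂ ∈ T → y₁ ∈ T) := by
  obtain ⟨p, q, hp, hq, hr⟩ := hs
  refine ⟨fun hx => ?_, fun hx => ?_⟩
  · exact hT x₁ hx y₂ x₂ y₁ p q hy₁.symm (by rw [hTcol x₁ hx] at hne; exact hne.symm)
      (hy₂.trans (hTcol x₁ hx)) (Or.inl ⟨hp, hq⟩) hr
  · exact hT x₂ hx y₁ x₁ y₂ p q hy₂.symm (by rwa [hTcol x₂ hx] at hne)
      (hy₁.trans (hTcol x₂ hx)) (Or.inr ⟨hp, hq⟩) hr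

theorem exists_square_of_mem {G : ColoredGraph k} {rel : GPath G → GPath G → Prop} {f : G.E}
    {S : Set G.E} (hK : IsKGraphRel G rel) (hScol : ∀ g ∈ S, G.color g = G.color f)
    (hclosed : SqClosed G rel f S) {e g : G.E} (hg : g ∈ S) (hglue : G.src g = G.rng e)
    (he : G.color e ≠ G.color f) :
    ∃ f₁ f₂ : G.E, EdgesRel G rel [f₁, f₂] [e, g] ∧
      (f₁ ∈ S ∧ G.src f₂ = G.rng f₁ ∧ G.color f₂ ≠ G.color f) ∧ G.color f₂ = G.color e := by
  obtain ⟨f₁, f₂, hs, hc₁, hc₂⟩ := hK.swappable hglue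
  have hne : G.color e ≠ G.color g := by rwa [hScol g hg]
  refine ⟨f₁, f₂, hs, ⟨?_, ((hs.symm hK.1).square_endpoints hK.2.1).2.1, hc₂ ▸ he⟩, hc₂⟩
  exact (hclosed.mem_of_square hScol (hs.symm hK.1) hc₁ hc₂ hne).2 hg

namespace SatHyp

variable {G : ColoredGraph k} {rel : GPath G → GPath G → Prop} {f : G.E} {S : Set G.E}
  (hsat : SatHyp G rel f S)

/-- The sides `(h, a)` of the square `b ∘ g ∼ h ∘ a` chosen by `hsat`; `e_{[b∘g]}` ends at `v_h`. -/
noncomputable def corner (g b : G.E) (hc : g ∈ S ∧ G.src b = G.rng g ∧ G.color b ≠ G.color f) :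
    {h : G.E // h ∈ S} × G.E :=
  Classical.choose (hsat g hc.1 b hc.2.1 hc.2.2)

variable {g b : G.E} (hc : g ∈ S ∧ G.src b = G.rng g ∧ G.color b ≠ G.color f)

theorem corner_spec :
    EdgesRel G rel [g, b] [(hsat.corner g b hc).2, (hsat.corner g b hc).1.1] :=
  Classical.choose_spec (hsat g hc.1 b hc.2.1 hc.2.2)

theorem color_corner (hP : PreservesRSD G rel) (hScol : ∀ g ∈ S, G.color g = G.color f) :
    G.color (hsat.corner g b hc).2 = G.color b :=
  (hsat.corner_spec hc).color_eq_of_square hP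
    ((hScol g hc.1).trans (hScol _ (hsat.corner g b hc).1.2).symm)

theorem corner_unique (hK : IsKGraphRel G rel) (hScol : ∀ g ∈ S, G.color g = G.color f)
    {a h : G.E} (hh : h ∈ S) (hs : EdgesRel G rel [g, b] [a, h]) :
    a = (hsat.corner g b hc).2 ∧ h = (hsat.corner g b hc).1.1 := by
  have hcol : G.color a = G.color b :=
    hs.color_eq_of_square hK.2.1 ((hScol g hc.1).trans (hScol h hh).symm)
  have := (hs.symm hK.1).trans hK.1 (hsat.corner_spec hc) (List.cons_ne_nil _ _)
  simpa using this.eq_of_map_color_eq hK (by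
    simp [hcol, hsat.color_corner hc hK.2.1 hScol, hScol h hh, hScol _ (hsat.corner g b hc).1.2])

theorem eq_of_corner_eq (hK : IsKGraphRel G rel) (hScol : ∀ g ∈ S, G.color g = G.color f)
    {g' b' : G.E} {hc' : g' ∈ S ∧ G.src b' = G.rng g' ∧ G.color b' ≠ G.color f}
    (h : hsat.corner g b hc = hsat.corner g' b' hc') (hcol : G.color b = G.color b') :
    g = g' ∧ b = b' := by
  have hs := (hsat.corner_spec hc).trans hK.1 (h ▸ (hsat.corner_spec hc').symm hK.1)
    (List.cons_ne_nil _ _)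
  simpa using hs.eq_of_map_color_eq hK (by simp [hScol g hc.1, hScol g' hc'.1, hcol])

/-- Both routes around the cube `b ∘ a ∘ g₀ ∼ a' ∘ b' ∘ g₀` carry `g₀` to the same edge of `S`. -/
theorem corner_eq_of_cube (hK : IsKGraphRel G rel) (hScol : ∀ g ∈ S, G.color g = G.color f)
    {g₀ g₁ g₃ a b a' b' a₁ b₁ : G.E}
    (hc₂ : g₁ ∈ S ∧ G.src b = G.rng g₁ ∧ G.color b ≠ G.color f)
    (hc₄ : g₃ ∈ S ∧ G.src a' = G.rng g₃ ∧ G.color a' ≠ G.color f)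
    (hPQ : EdgesRel G rel [g₀, a, b] [g₀, b', a'])
    (hu : EdgesRel G rel [g₀, a] [a₁, g₁]) (hw : EdgesRel G rel [g₀, b'] [b₁, g₃]) :
    (hsat.corner g₁ b hc₂).1 = (hsat.corner g₃ a' hc₄).1 := by
  have ne {x : G.E} {l : List G.E} : x :: l ≠ [] := List.cons_ne_nil _ _
  obtain ⟨_, hP⟩ := (hPQ.symm hK.1).exists_composable_right
  obtain ⟨_, hQ⟩ := hPQ.exists_composable_right
  have e₁ : EdgesRel G rel [g₀, a, b] [a₁, g₁, b] := hu.append_right (u := [b]) hK ne ne hP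
  have e₃ : EdgesRel G rel [g₀, b', a'] [b₁, g₃, a'] := hw.append_right (u := [a']) hK ne ne hQ
  obtain ⟨_, hP'⟩ := e₁.exists_composable_right
  obtain ⟨_, hQ'⟩ := e₃.exists_composable_right
  have e₂ := (hsat.corner_spec hc₂).append_left (u := [a₁]) hK ne ne hP'
  have e₄ := (hsat.corner_spec hc₄).append_left (u := [b₁]) hK ne ne hQ'
  have e := ((e₁.trans hK.1 e₂ ne).symm hK.1).trans hK.1
    (hPQ.trans hK.1 (e₃.trans hK.1 e₄ ne) ne) ne
  exact Subtype.ext (e.last_eq (l := [a₁, _]) (m := [b₁, _]) hK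
    ((hScol _ (hsat.corner g₁ b hc₂).1.2).trans (hScol _ (hsat.corner g₃ a' hc₄).1.2).symm))

end SatHyp

section DelayGraph

variable {G : ColoredGraph k} {rel : GPath G → GPath G → Prop} {f : G.E} {S : Set G.E}
  {hsat : SatHyp G rel f S}

local notation "Λ_D" => DelayGraph G rel f S hsat

def collapseV : (Λ_D).V → G.V
  | Sum.inl v => v
  | Sum.inr g => G.rng g.1

def collapseE : (Λ_D).E → List G.E
  | Sum.inl e => [e.1]
  | Sum.inr (Sum.inl (g, false)) => [g.1]
  | Sum.inr (Sum.inl (_, true)) => []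
  | Sum.inr (Sum.inr x) => [x.1.2]

theorem collapseE_composable (hP : PreservesRSD G rel) (ε : (Λ_D).E) :
    G.Composable (collapseV ((Λ_D).src ε)) (collapseE ε) ∧
      G.endV (collapseV ((Λ_D).src ε)) (collapseE ε) = collapseV ((Λ_D).rng ε) := by
  rcases ε with e | ⟨g, _ | _⟩ | ⟨⟨g, b⟩, hc⟩
  · exact ⟨⟨rfl, trivial⟩, rfl⟩
  · exact ⟨⟨rfl, trivial⟩, rfl⟩
  · exact ⟨trivial, rfl⟩
  · exact ⟨⟨hc.2.1, trivial⟩, ((hsat.corner_spec hc).square_endpoints hP).2.2.symm⟩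

theorem collapse_composable (hP : PreservesRSD G rel) :
    ∀ (l : List (Λ_D).E) (s : (Λ_D).V), (Λ_D).Composable s l →
      G.Composable (collapseV s) (l.flatMap collapseE) ∧
        G.endV (collapseV s) (l.flatMap collapseE) = collapseV ((Λ_D).endV s l)
  | [], _, _ => ⟨trivial, rfl⟩
  | ε :: l, s, hc => by
    obtain ⟨c₁, e₁⟩ := collapseE_composable hP ε
    obtain ⟨c₂, e₂⟩ := collapse_composable hP l _ hc.2
    rw [hc.1] at c₁ e₁
    rw [List.flatMap_cons, composable_append_iff, endV_append, e₁]
    exact ⟨⟨c₁, e₁ ▸ c₂⟩, e₂⟩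

/-- The image in `Λ` of a path of `Λ_D` under the functor contracting every `g²`. -/
def collapse (hP : PreservesRSD G rel) (p : GPath Λ_D) : GPath G :=
  ⟨collapseV p.src, p.edges.flatMap collapseE, (collapse_composable hP _ _ p.comp).1⟩

theorem collapse_rng (hP : PreservesRSD G rel) (p : GPath Λ_D) :
    (collapse hP p).rng = collapseV p.rng :=
  (collapse_composable hP _ _ p.comp).2

theorem collapse_append (hP : PreservesRSD G rel) (p q : GPath Λ_D) (h : p.rng = q.src) :
    collapse hP (p.append q h) =
      (collapse hP p).append (collapse hP q) ((collapse_rng hP p).trans (congrArg collapseV h)) :=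
  GPath.ext rfl List.flatMap_append

theorem endV_colors_collapseE_of_old {l : List (Λ_D).E} {l' : List G.E}
    (hl : List.Forall₂ (fun ε e => ∃ h : e ∉ S, ε = DelayOld G f S e h) l l') (v : G.V) :
    (Λ_D).endV (Sum.inl v) l = Sum.inl (G.endV v l') ∧
      l.map (Λ_D).color = l'.map G.color ∧ l.flatMap collapseE = l' := by
  induction hl generalizing v with
  | nil => exact ⟨rfl, rfl, rfl⟩
  | cons h _ ih =>
    obtain ⟨_, rfl⟩ := h
    obtain ⟨h₁, h₂, h₃⟩ := ih _
    exact ⟨h₁, congrArg₂ _ rfl h₂, congrArg₂ _ rfl h₃⟩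

/-- The invariant of `DelayRel` behind (KG4). -/
def DelayInv (hP : PreservesRSD G rel) (p q : GPath Λ_D) : Prop :=
  p.src = q.src ∧ p.rng = q.rng ∧ p.colors.Perm q.colors ∧ rel (collapse hP p) (collapse hP q)

theorem delayInv_equivalence (hK : IsKGraphRel G rel) :
    Equivalence (DelayInv (hsat := hsat) hK.2.1) where
  refl _ := ⟨rfl, rfl, List.Perm.refl _, hK.1.refl _⟩
  symm h := ⟨h.1.symm, h.2.1.symm, h.2.2.1.symm, hK.1.symm h.2.2.2⟩
  trans h h' := ⟨h.1.trans h'.1, h.2.1.trans h'.2.1, h.2.2.1.trans h'.2.2.1,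
    hK.1.trans h.2.2.2 h'.2.2.2⟩

theorem DelayInv.append (hK : IsKGraphRel G rel) {p₁ p₂ q₁ q₂ : GPath Λ_D}
    (h : p₁.rng = p₂.src) (h' : q₁.rng = q₂.src) (h₁ : DelayInv hK.2.1 p₁ q₁)
    (h₂ : DelayInv hK.2.1 p₂ q₂) : DelayInv hK.2.1 (p₁.append p₂ h) (q₁.append q₂ h') := by
  refine ⟨h₁.1, ?_, ?_, ?_⟩
  · rw [GPath.rng_append, GPath.rng_append]; exact h₂.2.1
  · rw [GPath.colors_append, GPath.colors_append]; exact h₁.2.2.1.append h₂.2.2.1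
  · rw [collapse_append, collapse_append]; exact hK.2.2.1 _ _ _ _ _ _ h₁.2.2.2 h₂.2.2.2

theorem delayInv_old (hK : IsKGraphRel G rel) {p q : GPath Λ_D} {p' q' : GPath G}
    (hp : List.Forall₂ (fun ε e => ∃ h : e ∉ S, ε = DelayOld G f S e h) p.edges p'.edges)
    (hps : p.src = Sum.inl p'.src)
    (hq : List.Forall₂ (fun ε e => ∃ h : e ∉ S, ε = DelayOld G f S e h) q.edges q'.edges)
    (hqs : q.src = Sum.inl q'.src) (hr : rel p' q') : DelayInv hK.2.1 p q := by
  obtain ⟨hpr, hpc, hpe⟩ := endV_colors_collapseE_of_old hp p'.src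
  obtain ⟨hqr, hqc, hqe⟩ := endV_colors_collapseE_of_old hq q'.src
  have hcp : collapse hK.2.1 p = p' := GPath.ext (by simp [collapse, hps, collapseV]) hpe
  have hcq : collapse hK.2.1 q = q' := GPath.ext (by simp [collapse, hqs, collapseV]) hqe
  refine ⟨by rw [hps, hqs, (hK.2.1 _ _ hr).1], ?_, ?_, by rwa [hcp, hcq]⟩
  · change (Λ_D).endV p.src p.edges = (Λ_D).endV q.src q.edges
    rw [hps, hqs, hpr, hqr]
    exact congrArg Sum.inl (hK.2.1 _ _ hr).2.1
  · change (p.edges.map _).Perm (q.edges.map _)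
    rw [hpc, hqc]
    exact colors_perm_of_rel hK.2.1 hr

theorem delayInv_splitTop (hK : IsKGraphRel G rel) (hScol : ∀ g ∈ S, G.color g = G.color f)
    {p q : GPath Λ_D} {g h a b : G.E} {hg : g ∈ S} {hh : h ∈ S} {hb : b ∉ S}
    {hc : g ∈ S ∧ G.src b = G.rng g ∧ G.color b ≠ G.color f}
    (hs : EdgesRel G rel [g, b] [a, h])
    (hp : p.edges = [DelayHalf G f S g hg true, DelayOld G f S b hb])
    (hq : q.edges = [DelayNew G f S g b hc, DelayHalf G f S h hh true]) :
    DelayInv hK.2.1 p q := by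
  have hsrc : p.src = q.src := by
    rw [GPath.src_of_edges_eq_cons hp, GPath.src_of_edges_eq_cons hq]; rfl
  have hcoll : collapse hK.2.1 p = collapse hK.2.1 q := GPath.ext (congrArg collapseV hsrc)
    (by simp only [collapse, hp, hq]; rfl)
  refine ⟨hsrc, ?_, ?_, hcoll ▸ hK.1.refl _⟩
  · rw [GPath.rng_of_edges_eq_concat (l := [_]) hp, GPath.rng_of_edges_eq_concat (l := [_]) hq]
    exact congrArg Sum.inl ((hs.square_endpoints hK.2.1).2.2.symm)
  · rw [GPath.colors, hp, GPath.colors, hq]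
    change [G.color g, G.color b].Perm [G.color b, G.color h]
    rw [hScol g hg, hScol h hh]
    exact List.Perm.swap _ _ _

theorem delayInv_splitBottom (hK : IsKGraphRel G rel) (hScol : ∀ g ∈ S, G.color g = G.color f)
    {p q : GPath Λ_D} {g h a b : G.E} {hg : g ∈ S} {hh : h ∈ S} {ha : a ∉ S}
    {hc : g ∈ S ∧ G.src b = G.rng g ∧ G.color b ≠ G.color f}
    (hs : EdgesRel G rel [g, b] [a, h])
    (hp : p.edges = [DelayHalf G f S g hg false, DelayNew G f S g b hc])
    (hq : q.edges = [DelayOld G f S a ha, DelayHalf G f S h hh false]) :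
    DelayInv hK.2.1 p q := by
  have hsrc : p.src = q.src := by
    rw [GPath.src_of_edges_eq_cons hp, GPath.src_of_edges_eq_cons hq]
    exact congrArg Sum.inl (hs.square_endpoints hK.2.1).1.symm
  refine ⟨hsrc, ?_, ?_, hs.rel ?_ ?_ (List.cons_ne_nil _ _) (List.cons_ne_nil _ _)⟩
  · rw [GPath.rng_of_edges_eq_concat (l := [_]) hp, GPath.rng_of_edges_eq_concat (l := [_]) hq]
    exact congrArg Sum.inr (Subtype.ext (hsat.corner_unique hc hK hScol hh hs).2.symm)
  · rw [GPath.colors, hp, GPath.colors, hq]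
    exact (hs.perm hK.2.1 :)
  · simp only [collapse, hp]; rfl
  · simp only [collapse, hq]; rfl

theorem delayInv_cube (hK : IsKGraphRel G rel) (hScol : ∀ g ∈ S, G.color g = G.color f)
    {p q : GPath Λ_D} {g₀ g₁ g₃ a b a' b' a₁ b₁ : G.E}
    {hc₁ : g₀ ∈ S ∧ G.src a = G.rng g₀ ∧ G.color a ≠ G.color f}
    {hc₂ : g₁ ∈ S ∧ G.src b = G.rng g₁ ∧ G.color b ≠ G.color f}
    {hc₃ : g₀ ∈ S ∧ G.src b' = G.rng g₀ ∧ G.color b' ≠ G.color f}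
    {hc₄ : g₃ ∈ S ∧ G.src a' = G.rng g₃ ∧ G.color a' ≠ G.color f}
    (hPQ : EdgesRel G rel [g₀, a, b] [g₀, b', a'])
    (hu : EdgesRel G rel [g₀, a] [a₁, g₁]) (hw : EdgesRel G rel [g₀, b'] [b₁, g₃])
    (hp : p.edges = [DelayNew G f S g₀ a hc₁, DelayNew G f S g₁ b hc₂])
    (hq : q.edges = [DelayNew G f S g₀ b' hc₃, DelayNew G f S g₃ a' hc₄]) :
    DelayInv hK.2.1 p q := by
  have hsrc : p.src = q.src := by
    rw [GPath.src_of_edges_eq_cons hp, GPath.src_of_edges_eq_cons hq]; rfl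
  refine ⟨hsrc, ?_, ?_, (hPQ.head_eq hK rfl).2.rel ?_ ?_ (List.cons_ne_nil _ _)
    (List.cons_ne_nil _ _)⟩
  · rw [GPath.rng_of_edges_eq_concat (l := [_]) hp, GPath.rng_of_edges_eq_concat (l := [_]) hq]
    exact congrArg Sum.inr (hsat.corner_eq_of_cube hK hScol hc₂ hc₄ hPQ hu hw)
  · rw [GPath.colors, hp, GPath.colors, hq]
    exact (hPQ.perm hK.2.1 :).cons_inv
  · simp only [collapse, hp]; rfl
  · simp only [collapse, hq]; rfl

theorem DelayRel.delayInv (hK : IsKGraphRel G rel) (hScol : ∀ g ∈ S, G.color g = G.color f)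
    {p q : GPath Λ_D} (h : DelayRel G rel f S hsat p q) : DelayInv hK.2.1 p q := by
  induction h with
  | old _ _ _ _ hp hps hq hqs hr => exact delayInv_old hK hp hps hq hqs hr
  | splitTop _ _ _ _ _ _ _ _ _ _ p' q' hp' hq' hr hp hq =>
    exact delayInv_splitTop hK hScol ⟨p', q', hp', hq', hr⟩ hp hq
  | splitBottom _ _ _ _ _ _ _ _ _ _ p' q' hp' hq' hr hp hq =>
    exact delayInv_splitBottom hK hScol ⟨p', q', hp', hq', hr⟩ hp hq
  | cube _ _ _ _ _ _ _ _ _ _ _ _ _ _ _ _ _ _ P Q u u' w w' hP hQ hPQ hu hu' huu hw hw' hww hp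
      hq =>
    exact delayInv_cube hK hScol ⟨P, Q, hP, hQ, hPQ⟩ ⟨u, u', hu, hu', huu⟩ ⟨w, w', hw, hw', hww⟩
      hp hq
  | refl p => exact (delayInv_equivalence hK).refl p
  | symm _ _ _ ih => exact (delayInv_equivalence hK).symm ih
  | trans _ _ _ _ _ ih₁ ih₂ => exact (delayInv_equivalence hK).trans ih₁ ih₂
  | concat _ _ _ _ h h' _ _ ih₁ ih₂ => exact ih₁.append hK h h' ih₂

theorem head_eq_of_edgesRel_collapseE (hK : IsKGraphRel G rel)
    (hScol : ∀ g ∈ S, G.color g = G.color f) {ε₁ ε₂ : (Λ_D).E} {t₁ t₂ : List G.E}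
    (hs : (Λ_D).src ε₁ = (Λ_D).src ε₂) (hc : (Λ_D).color ε₁ = (Λ_D).color ε₂)
    (h : EdgesRel G rel (collapseE ε₁ ++ t₁) (collapseE ε₂ ++ t₂)) : ε₁ = ε₂ := by
  rcases ε₁ with ⟨e₁, he₁⟩ | ⟨⟨g₁, hg₁⟩, _ | _⟩ | ⟨⟨g₁, b₁⟩, hx₁⟩ <;>
  rcases ε₂ with ⟨e₂, he₂⟩ | ⟨⟨g₂, hg₂⟩, _ | _⟩ | ⟨⟨g₂, b₂⟩, hx₂⟩ <;>
  simp [DelayGraph] at hs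
  · obtain rfl := (h.head_eq hK hc).1; rfl
  · have heq : e₁ = g₂ := (h.head_eq hK hc).1
    exact absurd (heq ▸ hg₂) he₁
  · have heq : g₁ = e₂ := (h.head_eq hK hc).1
    exact absurd (heq ▸ hg₁) he₂
  · obtain rfl := (h.head_eq hK hc).1; rfl
  · subst hs; rfl
  · exact absurd ((hc : G.color g₁ = G.color b₂).symm.trans (hScol g₁ hg₁)) hx₂.2.2
  · exact absurd ((hc : G.color b₁ = G.color g₂).trans (hScol g₂ hg₂)) hx₁.2.2
  · subst hs; obtain rfl := (h.head_eq hK hc).1; rfl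

theorem eq_of_edgesRel_flatMap_collapseE (hK : IsKGraphRel G rel)
    (hScol : ∀ g ∈ S, G.color g = G.color f) :
    ∀ (l₁ l₂ : List (Λ_D).E) (s : (Λ_D).V), (Λ_D).Composable s l₁ → (Λ_D).Composable s l₂ →
      l₁.map (Λ_D).color = l₂.map (Λ_D).color →
      EdgesRel G rel (l₁.flatMap collapseE) (l₂.flatMap collapseE) → l₁ = l₂
  | [], [], _, _, _, _, _ => rfl
  | [], _ :: _, _, _, _, hc, _ => by simp at hc
  | _ :: _, [], _, _, _, hc, _ => by simp at hc
  | ε₁ :: t₁, ε₂ :: t₂, s, c₁, c₂, hc, h => by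
    obtain ⟨hc, hct⟩ := List.cons.inj hc
    rw [List.flatMap_cons, List.flatMap_cons] at h
    obtain rfl := head_eq_of_edgesRel_collapseE hK hScol (c₁.1.trans c₂.1.symm) hc h
    rw [eq_of_edgesRel_flatMap_collapseE hK hScol t₁ t₂ _ c₁.2 c₂.2 hct (h.of_append_left hK)]

theorem DelayRel.eq_of_colors_eq (hK : IsKGraphRel G rel) (hScol : ∀ g ∈ S, G.color g = G.color f)
    {p q : GPath Λ_D} (h : DelayRel G rel f S hsat p q) (hc : p.colors = q.colors) : p = q := by
  obtain ⟨hs, -, -, hr⟩ := h.delayInv hK hScol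
  obtain ⟨s, l₁, c₁⟩ := p
  obtain ⟨_, l₂, c₂⟩ := q
  subst hs
  exact GPath.ext rfl
    (eq_of_edgesRel_flatMap_collapseE hK hScol l₁ l₂ s c₁ c₂ hc ⟨_, _, rfl, rfl, hr⟩)

theorem swappable_old_old (hK : IsKGraphRel G rel) (hScol : ∀ g ∈ S, G.color g = G.color f)
    (hclosed : SqClosed G rel f S) {e₁ e₂ : G.E} (he₁ : e₁ ∉ S) (he₂ : e₂ ∉ S)
    (hglue : G.src e₂ = G.rng e₁) (hne : G.color e₁ ≠ G.color e₂) :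
    Swappable (Λ_D) (DelayRel G rel f S hsat) (DelayOld G f S e₁ he₁) (DelayOld G f S e₂ he₂) := by
  obtain ⟨f₁, f₂, hs, hc₁, hc₂⟩ := hK.swappable hglue
  have hf := hclosed.mem_of_square hScol hs hc₂.symm hc₁.symm (by rw [hc₁, hc₂]; exact hne.symm)
  have hf₁ : f₁ ∉ S := fun h => he₂ (hf.1 h)
  have hf₂ : f₂ ∉ S := fun h => he₁ (hf.2 h)
  obtain ⟨p', q', hp', hq', hr⟩ := hs
  have hglue' : G.src f₂ = G.rng f₁ := by have c := p'.comp; rw [hp'] at c; exact c.2.1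
  exact Swappable.of_rel (e₁' := DelayOld G f S f₁ hf₁) (e₂' := DelayOld G f S f₂ hf₂)
    (congrArg Sum.inl hglue') (congrArg Sum.inl hglue)
    (DelayRel.old _ _ p' q' (by rw [hp']; exact .cons ⟨hf₁, rfl⟩ (.cons ⟨hf₂, rfl⟩ .nil))
      (congrArg Sum.inl (GPath.src_of_edges_eq_cons hp').symm)
      (by rw [hq']; exact .cons ⟨he₁, rfl⟩ (.cons ⟨he₂, rfl⟩ .nil))
      (congrArg Sum.inl (GPath.src_of_edges_eq_cons hq').symm) hr) hc₁ hc₂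

theorem swappable_old_half (hK : IsKGraphRel G rel) (hScol : ∀ g ∈ S, G.color g = G.color f)
    (hclosed : SqClosed G rel f S) {e g : G.E} (he : e ∉ S) (hg : g ∈ S)
    (hglue : G.src g = G.rng e) (hne : G.color e ≠ G.color g) :
    Swappable (Λ_D) (DelayRel G rel f S hsat) (DelayOld G f S e he)
      (DelayHalf G f S g hg false) := by
  obtain ⟨f₁, f₂, ⟨p', q', hp', hq', hr⟩, hc, hcol⟩ :=
    exists_square_of_mem hK hScol hclosed hg hglue (by rwa [← hScol g hg])
  exact Swappable.of_rel (e₁' := DelayHalf G f S f₁ hc.1 false) (e₂' := DelayNew G f S f₁ f₂ hc)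
    rfl (congrArg Sum.inl hglue)
    (DelayRel.splitBottom _ _ f₁ g e f₂ hc.1 hg he hc p' q' hp' hq' hr rfl rfl)
    ((hScol f₁ hc.1).trans (hScol g hg).symm) hcol

theorem swappable_half_old (hScol : ∀ g ∈ S, G.color g = G.color f) {g e : G.E} (hg : g ∈ S)
    (he : e ∉ S) (hglue : G.src e = G.rng g) (hne : G.color g ≠ G.color e) :
    Swappable (Λ_D) (DelayRel G rel f S hsat) (DelayHalf G f S g hg true)
      (DelayOld G f S e he) := by
  have hc : g ∈ S ∧ G.src e = G.rng g ∧ G.color e ≠ G.color f :=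
    ⟨hg, hglue, by rw [← hScol g hg]; exact hne.symm⟩
  obtain ⟨p', q', hp', hq', hr⟩ := hsat.corner_spec hc
  exact Swappable.of_rel (e₁' := DelayNew G f S g e hc)
    (e₂' := DelayHalf G f S _ (hsat.corner g e hc).1.2 true) rfl (congrArg Sum.inl hglue)
    (DelayRel.symm _ _ (DelayRel.splitTop _ _ g _ _ e hg _ he hc p' q' hp' hq' hr rfl rfl))
    rfl ((hScol _ (hsat.corner g e hc).1.2).trans (hScol g hg).symm)

theorem swappable_half_new (hK : IsKGraphRel G rel) (hScol : ∀ g ∈ S, G.color g = G.color f)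
    {g b : G.E} (hc : g ∈ S ∧ G.src b = G.rng g ∧ G.color b ≠ G.color f) :
    Swappable (Λ_D) (DelayRel G rel f S hsat) (DelayHalf G f S g hc.1 false)
      (DelayNew G f S g b hc) := by
  have hsq := hsat.corner_spec hc
  have hglue := (hsq.square_endpoints hK.2.1).2.1
  have ha : (hsat.corner g b hc).2 ∉ S := fun h =>
    hc.2.2 ((hsat.color_corner hc hK.2.1 hScol).symm.trans (hScol _ h))
  obtain ⟨p', q', hp', hq', hr⟩ := hsq
  exact Swappable.of_rel (e₁' := DelayOld G f S _ ha)
    (e₂' := DelayHalf G f S _ (hsat.corner g b hc).1.2 false) (congrArg Sum.inl hglue) rfl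
    (DelayRel.symm _ _ (DelayRel.splitBottom _ _ g _ _ b hc.1 _ ha hc p' q' hp' hq' hr rfl rfl))
    (hsat.color_corner hc hK.2.1 hScol)
    ((hScol _ (hsat.corner g b hc).1.2).trans (hScol g hc.1).symm)

theorem swappable_new_half (hScol : ∀ g ∈ S, G.color g = G.color f) {g b : G.E}
    (hc : g ∈ S ∧ G.src b = G.rng g ∧ G.color b ≠ G.color f) :
    Swappable (Λ_D) (DelayRel G rel f S hsat) (DelayNew G f S g b hc)
      (DelayHalf G f S _ (hsat.corner g b hc).1.2 true) := by
  have hb : b ∉ S := fun h => hc.2.2 (hScol b h)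
  obtain ⟨p', q', hp', hq', hr⟩ := hsat.corner_spec hc
  exact Swappable.of_rel (e₁' := DelayHalf G f S g hc.1 true) (e₂' := DelayOld G f S b hb)
    (congrArg Sum.inl hc.2.1) rfl
    (DelayRel.splitTop _ _ g _ _ b hc.1 _ hb hc p' q' hp' hq' hr rfl rfl)
    ((hScol g hc.1).trans (hScol _ (hsat.corner g b hc).1.2).symm) rfl

theorem swappable_new_new (hK : IsKGraphRel G rel) {g b₁ b₂ : G.E}
    (hc₁ : g ∈ S ∧ G.src b₁ = G.rng g ∧ G.color b₁ ≠ G.color f)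
    (hc₂ : (hsat.corner g b₁ hc₁).1.1 ∈ S ∧ G.src b₂ = G.rng (hsat.corner g b₁ hc₁).1.1 ∧
      G.color b₂ ≠ G.color f) :
    Swappable (Λ_D) (DelayRel G rel f S hsat) (DelayNew G f S g b₁ hc₁)
      (DelayNew G f S _ b₂ hc₂) := by
  have hsq := hsat.corner_spec hc₁
  have hglue : G.src b₂ = G.rng b₁ := hc₂.2.1.trans (hsq.square_endpoints hK.2.1).2.2
  obtain ⟨w₁, w₂, hs, hcw₁, hcw₂⟩ := hK.swappable hglue
  obtain ⟨hsw, hgw, -⟩ := (hs.symm hK.1).square_endpoints hK.2.1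
  have hc₃ : g ∈ S ∧ G.src w₁ = G.rng g ∧ G.color w₁ ≠ G.color f :=
    ⟨hc₁.1, hsw.trans hc₁.2.1, hcw₁ ▸ hc₂.2.2⟩
  have hsq' := hsat.corner_spec hc₃
  have hc₄ : (hsat.corner g w₁ hc₃).1.1 ∈ S ∧ G.src w₂ = G.rng (hsat.corner g w₁ hc₃).1.1 ∧
      G.color w₂ ≠ G.color f :=
    ⟨(hsat.corner g w₁ hc₃).1.2, hgw.trans (hsq'.square_endpoints hK.2.1).2.2.symm,
      hcw₂ ▸ hc₁.2.2⟩
  obtain ⟨P, Q, hP, hQ, hr⟩ :=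
    hs.append_left (u := [g]) hK (List.cons_ne_nil _ _) (List.cons_ne_nil _ _)
      (v := G.src g) ⟨rfl, hc₃.2.1, hgw, trivial⟩
  obtain ⟨u, u', hu, hu', hr₁⟩ := hsq'
  obtain ⟨w, w', hw, hw', hr₂⟩ := hsq
  exact Swappable.of_rel (e₁' := DelayNew G f S g w₁ hc₃) (e₂' := DelayNew G f S _ w₂ hc₄) rfl rfl
    (DelayRel.cube _ _ g _ _ w₁ w₂ b₂ b₁ _ _ hc₁.1 hc₄.1 hc₂.1 hc₃ hc₄ hc₁ hc₂ P Q u u' w w'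
      hP hQ hr hu hu' hr₁ hw hw' hr₂ rfl rfl) hcw₁ hcw₂

theorem swappable_delayGraph (hK : IsKGraphRel G rel) (hScol : ∀ g ∈ S, G.color g = G.color f)
    (hclosed : SqClosed G rel f S) {ε₁ ε₂ : (Λ_D).E} (hglue : (Λ_D).src ε₂ = (Λ_D).rng ε₁)
    (hne : (Λ_D).color ε₁ ≠ (Λ_D).color ε₂) : Swappable (Λ_D) (DelayRel G rel f S hsat) ε₁ ε₂ := by
  rcases ε₁ with ⟨e₁, he₁⟩ | ⟨⟨g₁, hg₁⟩, _ | _⟩ | ⟨⟨g₁, b₁⟩, hx₁⟩ <;>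
  rcases ε₂ with ⟨e₂, he₂⟩ | ⟨⟨g₂, hg₂⟩, _ | _⟩ | ⟨⟨g₂, b₂⟩, hx₂⟩ <;>
  first | (simp [DelayGraph] at hglue; done) | skip
  · exact swappable_old_old hK hScol hclosed he₁ he₂ (Sum.inl.inj hglue) hne
  · exact swappable_old_half hK hScol hclosed he₁ hg₂ (Sum.inl.inj hglue) hne
  · exact absurd ((hScol g₁ hg₁).trans (hScol g₂ hg₂).symm) hne
  · obtain rfl : g₂ = g₁ := congrArg Subtype.val (Sum.inr.inj hglue)
    exact swappable_half_new hK hScol hx₂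
  · exact swappable_half_old hScol hg₁ he₂ (Sum.inl.inj hglue) hne
  · exact absurd ((hScol g₁ hg₁).trans (hScol g₂ hg₂).symm) hne
  · obtain rfl : g₂ = (hsat.corner g₁ b₁ hx₁).1.1 := congrArg Subtype.val (Sum.inr.inj hglue)
    exact swappable_new_half hScol hx₁
  · obtain rfl : g₂ = (hsat.corner g₁ b₁ hx₁).1.1 := congrArg Subtype.val (Sum.inr.inj hglue)
    exact swappable_new_new hK hx₁ hx₂

theorem sourceFree_delayGraph (hK : IsKGraphRel G rel) (hScol : ∀ g ∈ S, G.color g = G.color f)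
    (hclosed : SqClosed G rel f S) (hsf : SourceFree G) : SourceFree (Λ_D) := by
  rintro (v | ⟨g, hg⟩) i
  · obtain ⟨e, he, hei⟩ := hsf v i
    by_cases hmem : e ∈ S
    · exact ⟨DelayHalf G f S e hmem true, congrArg Sum.inl he, hei⟩
    · exact ⟨DelayOld G f S e hmem, congrArg Sum.inl he, hei⟩
  · by_cases hi : i = G.color f
    · exact ⟨DelayHalf G f S g hg false, rfl, (hScol g hg).trans hi.symm⟩
    obtain ⟨a, ha, hai⟩ := hsf (G.src g) i
    obtain ⟨f₁, f₂, hs, hc, hcol⟩ := exists_square_of_mem hK hScol hclosed hg ha.symm (hai ▸ hi)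
    exact ⟨DelayNew G f S f₁ f₂ hc,
      congrArg Sum.inr (Subtype.ext (hsat.corner_unique hc hK hScol hg hs).2.symm), hcol.trans hai⟩

/-- For `e_{[b∘g]}` this is the side `a` of `b ∘ g ∼ h ∘ a` (not `b`), which makes it injective
on the edges into `v_h` of a given color. -/
noncomputable def baseEdge : (Λ_D).E → G.E
  | Sum.inl e => e.1
  | Sum.inr (Sum.inl (g, _)) => g.1
  | Sum.inr (Sum.inr x) => (hsat.corner x.1.1 x.1.2 x.2).2

theorem finite_rng_inl (hrf : RowFinite G) (v : G.V) (i : Fin k) :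
    {ε : (Λ_D).E | (Λ_D).rng ε = Sum.inl v ∧ (Λ_D).color ε = i}.Finite := by
  refine (hrf v i).of_injOn (f := baseEdge) ?_ ?_
  · rintro (e | ⟨g, _ | _⟩ | x) ⟨h₁, h₂⟩ <;>
    first | (simp [DelayGraph] at h₁; done) | exact ⟨Sum.inl.inj h₁, h₂⟩
  · rintro (⟨e, he⟩ | ⟨⟨g, hg⟩, _ | _⟩ | x) ⟨h₁, -⟩ (⟨e', he'⟩ | ⟨⟨g', hg'⟩, _ | _⟩ | x') ⟨h₁', -⟩
      (heq : baseEdge _ = baseEdge _) <;>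
    first | (simp [DelayGraph] at h₁; done) | (simp [DelayGraph] at h₁'; done) | skip
    · obtain rfl : e = e' := heq; rfl
    · have h : e = g' := heq
      exact absurd (h ▸ hg') he
    · have h : g = e' := heq
      exact absurd (h ▸ hg) he'
    · obtain rfl : g = g' := heq; rfl

theorem finite_rng_inr (hK : IsKGraphRel G rel) (hScol : ∀ g ∈ S, G.color g = G.color f)
    (hrf : RowFinite G) (g : {g : G.E // g ∈ S}) (i : Fin k) :
    {ε : (Λ_D).E | (Λ_D).rng ε = Sum.inr g ∧ (Λ_D).color ε = i}.Finite := by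
  by_cases hi : i = G.color f
  · refine (Set.finite_singleton (DelayHalf G f S g.1 g.2 false)).subset ?_
    rintro (e | ⟨g', _ | _⟩ | ⟨⟨g', b⟩, hx⟩) ⟨h₁, h₂⟩ <;>
      first | (simp [DelayGraph] at h₁; done) | skip
    · exact congrArg (fun x => Sum.inr (Sum.inl (x, false))) (Sum.inr.inj h₁)
    · exact absurd (h₂.trans hi) hx.2.2
  refine (hrf (G.src g.1) i).of_injOn (f := baseEdge) ?_ ?_
  · rintro (e | ⟨⟨g', hg'⟩, _ | _⟩ | ⟨⟨g', b⟩, hx⟩) ⟨h₁, h₂⟩ <;>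
      first | (simp [DelayGraph] at h₁; done) | skip
    · exact absurd ((hScol g' hg').symm.trans h₂).symm hi
    · obtain rfl : (hsat.corner g' b hx).1 = g := Sum.inr.inj h₁
      exact ⟨((hsat.corner_spec hx).square_endpoints hK.2.1).2.1.symm,
        (hsat.color_corner hx hK.2.1 hScol).trans h₂⟩
  · rintro (e | ⟨⟨g₁, hg₁⟩, _ | _⟩ | ⟨⟨g₁, b₁⟩, hx₁⟩) ⟨h₁, hc₁⟩
      (e' | ⟨⟨g₂, hg₂⟩, _ | _⟩ | ⟨⟨g₂, b₂⟩, hx₂⟩) ⟨h₂, hc₂⟩ (heq : baseEdge _ = baseEdge _) <;>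
      first | (simp [DelayGraph] at h₁; done) | (simp [DelayGraph] at h₂; done) | skip
    · exact absurd ((hScol g₁ hg₁).symm.trans hc₁).symm hi
    · exact absurd ((hScol g₁ hg₁).symm.trans hc₁).symm hi
    · exact absurd ((hScol g₂ hg₂).symm.trans hc₂).symm hi
    · obtain ⟨rfl, rfl⟩ := hsat.eq_of_corner_eq hx₁ hK hScol
        (Prod.ext (Sum.inr.inj (h₁.trans h₂.symm)) heq) (hc₁.trans hc₂.symm)
      rfl

theorem rowFinite_delayGraph (hK : IsKGraphRel G rel) (hScol : ∀ g ∈ S, G.color g = G.color f)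
    (hrf : RowFinite G) : RowFinite (Λ_D) := by
  rintro (v | g) i
  · exact finite_rng_inl hrf v i
  · exact finite_rng_inr hK hScol hrf g i

end DelayGraph

theorem delay_is_kgraph_general {k : ℕ} (G : ColoredGraph k) (rel : GPath G → GPath G → Prop)
    (hK : IsKGraphRel G rel) (hsf : SourceFree G) (hrf : RowFinite G)
    (f : G.E) (S : Set G.E) (hScol : ∀ g ∈ S, G.color g = G.color f)
    (hclosed : SqClosed G rel f S)
    (hsat : SatHyp G rel f S) :
    IsKGraphRel (DelayGraph G rel f S hsat) (DelayRel G rel f S hsat) ∧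
      SourceFree (DelayGraph G rel f S hsat) ∧
      RowFinite (DelayGraph G rel f S hsat) := by
  have hE : Equivalence (DelayRel G rel f S hsat) :=
    ⟨DelayRel.refl, DelayRel.symm _ _, DelayRel.trans _ _ _⟩
  have hP : PreservesRSD _ (DelayRel G rel f S hsat) := fun _ _ h =>
    let inv := h.delayInv hK hScol
    ⟨inv.1, inv.2.1, funext inv.2.2.1.count_eq⟩
  refine ⟨isKGraphRel_of_swappable hE hP DelayRel.concat
      (fun _ _ => swappable_delayGraph hK hScol hclosed)
      (fun _ _ h => h.eq_of_colors_eq hK hScol),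
    sourceFree_delayGraph hK hScol hclosed hsf, rowFinite_delayGraph hK hScol hrf⟩

/-- Delaying a row-finite source-free `k`-graph at the edge `f` (with `S` the
saturated set of edges generated by `f`) yields a row-finite source-free
`k`-graph. -/
theorem delay_is_kgraph {k : ℕ} (G : ColoredGraph k) (rel : GPath G → GPath G → Prop)
    (hK : IsKGraphRel G rel) (hsf : SourceFree G) (hrf : RowFinite G)
    (f : G.E) (S : Set G.E) (hfS : f ∈ S) (hScol : ∀ g ∈ S, G.color g = G.color f)
    (hclosed : SqClosed G rel f S)
    (hmin : ∀ T : Set G.E, f ∈ T → SqClosed G rel f T → S ⊆ T)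
    (hsat : SatHyp G rel f S) :
    IsKGraphRel (DelayGraph G rel f S hsat) (DelayRel G rel f S hsat) ∧
      SourceFree (DelayGraph G rel f S hsat) ∧
      RowFinite (DelayGraph G rel f S hsat) :=
  delay_is_kgraph_general G rel hK hsf hrf f S hScol hclosed hsat

end ColoredGraph
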